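/- Let A be a torsion-free abelian group and x an automorphism of A of finite order q such that [A,ₙx] = 1 for some n ≥ 1. Then x is the identity automorphism (i.e., [a, x] = 1 for all a ∈ A). -/

import Mathlib

def aengel {A : Type*} [Group A] (x : A ≃* A) (a : A) : ℕ → A
  | 0 => a
  | n + 1 => (aengel x a n)⁻¹ * x (aengel x a n)


private lemma casolo_aux_dvd : ∀ m : ℕ, (Polynomial.X ^ 2 : Polynomial ℤ) ∣
    ((1 + Polynomial.X) ^ m - 1 - (m : Polynomial ℤ) * Polynomial.X) := by
  intro m
  induction m with
  | zero => simp
  | succ k ih =>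
    obtain ⟨g, hg⟩ := ih
    refine ⟨g + g * Polynomial.X + (k : Polynomial ℤ), ?_⟩
    have hk : ((1 + Polynomial.X : Polynomial ℤ)) ^ k =
        Polynomial.X ^ 2 * g + 1 + (k : Polynomial ℤ) * Polynomial.X := by
      linear_combination hg
    have h2 : ((1 + Polynomial.X : Polynomial ℤ)) ^ (k + 1) =
        (1 + Polynomial.X) ^ k * (1 + Polynomial.X) := pow_succ _ _
    rw [h2, hk]
    push_cast
    ring

private lemma casolo_aux {R : Type*} [Ring R] (Y : R) (q n : ℕ) (hn : 1 ≤ n)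
    (hXq : Y ^ q = 1) (hφn : (Y - 1) ^ n = 0) :
    ((q : R)) ^ (n - 1) * (Y - 1) = 0 := by
  set φ : R := Y - 1 with hφ
  obtain ⟨g, hg⟩ := casolo_aux_dvd q
  set G : R := Polynomial.aeval φ g with hG
  have hGφ : Commute φ G := by
    have h1 : φ = Polynomial.aeval φ (Polynomial.X : Polynomial ℤ) := by simp
    rw [commute_iff_eq]
    conv_lhs => rw [h1]
    conv_rhs => rw [h1]
    rw [hG, ← map_mul, ← map_mul, mul_comm]
  have h0 : (q : R) * φ = -(φ ^ 2 * G) := by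
    have h2 := congrArg (Polynomial.aeval φ) hg
    simp only [map_sub, map_add, map_mul, map_pow, map_one, map_natCast,
      Polynomial.aeval_X, Polynomial.aeval_one] at h2
    have h1 : (1 + φ : R) = Y := by rw [hφ]; abel
    rw [h1, hXq, ← hG] at h2
    have h3 : -((q : R) * φ) = φ ^ 2 * G := by rw [← h2]; abel
    rw [← h3, neg_neg]
  have hind : ∀ j : ℕ, ((q : R)) ^ j * φ = φ ^ (j + 1) * (-G) ^ j := by
    intro j
    induction j with
    | zero => simp
    | succ k ih =>
      have hc1 : Commute φ (-G) := hGφ.neg_right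
      calc ((q : R)) ^ (k+1) * φ
          = (q : R) ^ k * ((q : R) * φ) := by noncomm_ring
        _ = (q : R) ^ k * (φ ^ 2 * (-G)) := by rw [h0]; noncomm_ring
        _ = ((q : R) ^ k * φ) * (φ * (-G)) := by noncomm_ring
        _ = (φ ^ (k + 1) * (-G) ^ k) * (φ * (-G)) := by rw [ih]
        _ = φ ^ (k + 1) * ((-G) ^ k * φ) * (-G) := by noncomm_ring
        _ = φ ^ (k + 1) * (φ * (-G) ^ k) * (-G) := by rw [(hc1.pow_right k).symm.eq]
        _ = φ ^ (k + 1 + 1) * (-G) ^ (k + 1) := by rw [pow_succ φ, pow_succ (-G)]; noncomm_ring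
  have h4 : n - 1 + 1 = n := Nat.succ_pred_eq_of_pos hn
  rw [hind (n-1), h4, hφn, zero_mul]

/-- If `A` is torsion-free abelian and `x` is an automorphism of finite order `q` with
`[A,ₙx] = 1`, then `x` is the identity automorphism. -/
theorem casolo_torsionfree {A : Type*} [CommGroup A] (x : A ≃* A) (q n : ℕ) (hn : 1 ≤ n)
    (hq : orderOf x = q) (hq1 : 1 ≤ q)
    (htf : ∀ a : A, a ≠ 1 → ¬ IsOfFinOrder a)
    (hE : ∀ a : A, aengel x a n = 1) :
    ∀ a : A, x a = a := by
  intro a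
  let X : AddMonoid.End (Additive A) := AddMonoidHom.mk' (fun b => Additive.ofMul (x (Additive.toMul b)))
    (fun b c => by simp [map_mul])
  let φ : AddMonoid.End (Additive A) := X - 1
  have hXapp : ∀ b : A, X (Additive.ofMul b) = Additive.ofMul (x b) := fun b => rfl
  have hφapp : ∀ b : A, φ (Additive.ofMul b) = Additive.ofMul (b⁻¹ * x b) := by
    intro b
    show X (Additive.ofMul b) - (1 : AddMonoid.End (Additive A)) (Additive.ofMul b) = _
    rw [hXapp, AddMonoid.End.one_apply]
    show Additive.ofMul (x b / b) = _
    exact congrArg Additive.ofMul (by rw [div_eq_mul_inv, mul_comm])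
  have hXq : X ^ q = 1 := by
    have hxq : x ^ q = 1 := hq ▸ pow_orderOf_eq_one x
    have key : ∀ m : ℕ, ∀ b : A, (X ^ m) (Additive.ofMul b) = Additive.ofMul ((x ^ m) b) := by
      intro m
      induction m with
      | zero => intro b; rfl
      | succ k ih =>
        intro b
        rw [pow_succ', pow_succ']
        show X ((X ^ k) (Additive.ofMul b)) = Additive.ofMul (x ((x ^ k) b))
        rw [ih, hXapp]
    refine AddMonoidHom.ext fun b => ?_
    have := key q (Additive.toMul b)
    rw [hxq] at this; exact this
  have hφpow : ∀ k : ℕ, ∀ b : A, (φ ^ k) (Additive.ofMul b) = Additive.ofMul (aengel x b k) := by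
    intro k
    induction k with
    | zero => intro b; rfl
    | succ j ih =>
      intro b
      rw [pow_succ']
      show φ ((φ ^ j) (Additive.ofMul b)) = _
      rw [ih, hφapp]
      rfl
  have hφn : φ ^ n = 0 := by
    refine AddMonoidHom.ext fun b => ?_
    have := hφpow n (Additive.toMul b)
    rw [hE] at this; exact this
  have hkey : ((q : AddMonoid.End (Additive A))) ^ (n - 1) * φ = 0 := by
    have := casolo_aux X q n hn hXq hφn
    exact this
  have happ := congrFun (congrArg DFunLike.coe hkey) (Additive.ofMul a)
  have hnc : ∀ (m : ℕ) (b : Additive A),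
      ((m : AddMonoid.End (Additive A))) b = m • b := by
    intro m b
    induction m with
    | zero => simp
    | succ k ih =>
      rw [Nat.cast_succ]
      show (k : AddMonoid.End (Additive A)) b + (1 : AddMonoid.End (Additive A)) b = _
      rw [ih, AddMonoid.End.one_apply, succ_nsmul]
  have hmul : ∀ (f h : AddMonoid.End (Additive A)) (b : Additive A), (f * h) b = f (h b) :=
    fun _ _ _ => rfl
  rw [hmul, hφapp] at happ
  have hq' : ((q : AddMonoid.End (Additive A)))^(n-1)
      = ((q^(n-1) : ℕ) : AddMonoid.End (Additive A)) := by exact (Nat.cast_pow q (n-1)).symm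
  rw [hq', hnc] at happ
  have hpow : (a⁻¹ * x a) ^ (q ^ (n - 1)) = 1 := by
    have h3 : Additive.ofMul ((a⁻¹ * x a) ^ (q ^ (n-1))) = Additive.ofMul (1 : A) := by
      rw [ofMul_pow]
      simpa using happ
    exact Additive.ofMul.injective h3
  have hfin : IsOfFinOrder (a⁻¹ * x a) := by
    rw [isOfFinOrder_iff_pow_eq_one]
    exact ⟨q ^ (n-1), Nat.pow_pos hq1, hpow⟩
  by_contra hne
  exact htf _ (fun h => hne ((inv_mul_eq_one.mp h).symm)) hfin
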